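/- Extending scope of existential quantifier over disjunction (rule 4): ∃x(φ ∨ ψ) is logically equivalent to (∃x φ) ∨ ψ, provided x does not occur free in ψ. -/

import Mathlib

open FirstOrder Language

/-- Formulas of independence logic over a first-order language `L`, with variables `ℕ`:
first-order formulas, conditional independence atoms `t1 ⊥_{t3} t2` (written
`indep t1 t2 t3`) between tuples (lists) of terms, conjunction, disjunction, and
existential and universal quantification. -/
inductive TeamFormula (L : Language) : Type _ where
  | fo (φ : L.Formula ℕ)
  | indep (t1 t2 t3 : List (L.Term ℕ))
  | and (φ ψ : TeamFormula L)
  | or (φ ψ : TeamFormula L)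
  | ex (x : ℕ) (φ : TeamFormula L)
  | all (x : ℕ) (φ : TeamFormula L)

namespace TeamFormula

variable {L : Language}

/-- The set of free variables of an independence-logic formula. -/
def Fr : TeamFormula L → Set ℕ
  | .fo φ => ↑φ.freeVarFinset
  | .indep t1 t2 t3 => ↑((t1 ++ t2 ++ t3).foldr (fun t s => t.varFinset ∪ s) ∅)
  | .and φ ψ => φ.Fr ∪ ψ.Fr
  | .or φ ψ => φ.Fr ∪ ψ.Fr
  | .ex x φ => φ.Fr \ {x}
  | .all x φ => φ.Fr \ {x}

/-- A team is a set of assignments. -/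
abbrev Team (M : Type*) := Set (ℕ → M)

/-- The value of a tuple (list) of terms under an assignment. -/
def listVal {M : Type*} [L.Structure M] (ts : List (L.Term ℕ)) (s : ℕ → M) : List M :=
  ts.map fun t => t.realize s

/-- Lax team semantics for independence logic.  First-order formulas are evaluated
pointwise; disjunction splits the team into a union; `∃x φ` is witnessed by a function
`F` from the team to nonempty sets of elements, extending the team to
`X(F/x) = {s(a/x) : s ∈ X, a ∈ F s}`; `∀x φ` duplicates the team to `X(M/x)`. -/
def Sat (M : Type*) [L.Structure M] : TeamFormula L → Team M → Prop
  | .fo φ, X => ∀ s ∈ X, φ.Realize s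
  | .indep t1 t2 t3, X => ∀ s ∈ X, ∀ s' ∈ X, listVal t3 s = listVal t3 s' →
      ∃ s'' ∈ X, listVal t1 s'' = listVal t1 s ∧ listVal t3 s'' = listVal t3 s ∧
        listVal t2 s'' = listVal t2 s'
  | .and φ ψ, X => φ.Sat M X ∧ ψ.Sat M X
  | .or φ ψ, X => ∃ Y Z : Team M, Y ∪ Z = X ∧ φ.Sat M Y ∧ ψ.Sat M Z
  | .ex x φ, X => ∃ F : (ℕ → M) → Set M, (∀ s ∈ X, (F s).Nonempty) ∧
      φ.Sat M {s' | ∃ s ∈ X, ∃ a ∈ F s, s' = Function.update s x a}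
  | .all x φ, X => φ.Sat M {s' | ∃ s ∈ X, ∃ a : M, s' = Function.update s x a}

end TeamFormula

/-
Satisfaction in lax team semantics is local: it depends only on the restriction `X ↾ V` of the
team to any set `V` of variables containing the free variables of the formula. In particular a
formula `ψ` without `x` free cannot tell a team from its supplement `X(F/x)`.

Given `X(F/x) = Y' ∪ Z'` with `φ` true on `Y'` and `ψ` on `Z'`, the assignments of `X` whose
supplements meet `Y'`, resp. `Z'`, split `X` into `X₁ ∪ X₂` with `Y' = X₁(F₁/x)` and
`Z' = X₂(F₂/x)`; so `∃x φ` holds on `X₁`, and by locality `ψ` holds on `X₂`. Conversely, from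
`X = Y ∪ Z` with `φ` on `Y(F/x)` and `ψ` on `Z`, supplementing `X` by `F` on `Y` and by the
current value of `x` on `Z` gives the team `Y(F/x) ∪ Z`.
-/

open Set Function

theorem FirstOrder.Language.Term.realize_eq_of_eqOn {L : Language} {α M : Type*}
    [DecidableEq α] [L.Structure M] {t : L.Term α} {v v' : α → M}
    (h : EqOn v v' t.varFinset) : t.realize v = t.realize v' := by
  rw [← realize_restrictVar' subset_rfl (v := v), ← realize_restrictVar' subset_rfl (v := v'),
    ← domRestrict_eq, ← domRestrict_eq, domRestrict_eq_domRestrict_iff.2 h]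

theorem FirstOrder.Language.Formula.realize_iff_of_eqOn {L : Language} {α M : Type*}
    [DecidableEq α] [L.Structure M] {φ : L.Formula α} {v v' : α → M}
    (h : EqOn v v' φ.freeVarFinset) : φ.Realize v ↔ φ.Realize v' := by
  rw [Formula.Realize, Formula.Realize,
    ← BoundedFormula.realize_restrictFreeVar' subset_rfl (v := v),
    ← BoundedFormula.realize_restrictFreeVar' subset_rfl (v := v'),
    ← domRestrict_eq, ← domRestrict_eq, domRestrict_eq_domRestrict_iff.2 h]

namespace TeamFormula

variable {L : Language} {M : Type*} [L.Structure M] {V : Set ℕ}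

theorem mem_fr_indep {t1 t2 t3 : List (L.Term ℕ)} {y : ℕ} :
    y ∈ (indep t1 t2 t3).Fr ↔ ∃ t ∈ t1 ++ t2 ++ t3, y ∈ t.varFinset := by
  simp only [Fr]
  induction t1 ++ t2 ++ t3 with
  | nil => simp
  | cons t l ih => simp [ih]

theorem listVal_eq_of_eqOn {ts : List (L.Term ℕ)} {s s' : ℕ → M}
    (hts : ∀ t ∈ ts, ↑t.varFinset ⊆ V) (h : EqOn s s' V) : listVal ts s = listVal ts s' :=
  List.map_congr_left fun t ht => Term.realize_eq_of_eqOn (h.mono (hts t ht))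

def supplement (X : Team M) (F : (ℕ → M) → Set M) (x : ℕ) : Team M :=
  {s' | ∃ s ∈ X, ∃ a ∈ F s, s' = update s x a}

def AgreeOn (V : Set ℕ) (X Y : Team M) : Prop :=
  V.domRestrict '' X = V.domRestrict '' Y

theorem agreeOn_iff {X Y : Team M} :
    AgreeOn V X Y ↔ (∀ s ∈ X, ∃ t ∈ Y, EqOn s t V) ∧ ∀ t ∈ Y, ∃ s ∈ X, EqOn s t V := by
  simp only [AgreeOn, Set.ext_iff, mem_image, ← domRestrict_eq_domRestrict_iff]
  constructor
  · intro h
    refine ⟨fun s hs => ?_, fun t ht => ?_⟩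
    · obtain ⟨t, ht, e⟩ := (h _).1 ⟨s, hs, rfl⟩
      exact ⟨t, ht, e.symm⟩
    · exact (h _).2 ⟨t, ht, rfl⟩
  · rintro ⟨hXY, hYX⟩ r
    constructor
    · rintro ⟨s, hs, rfl⟩
      obtain ⟨t, ht, e⟩ := hXY s hs
      exact ⟨t, ht, e.symm⟩
    · rintro ⟨t, ht, rfl⟩
      exact hYX t ht

theorem AgreeOn.sep {X Y X₁ : Team M} (h : AgreeOn V X Y) (h₁ : X₁ ⊆ X) :
    AgreeOn V X₁ {t ∈ Y | ∃ s ∈ X₁, EqOn s t V} := by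
  refine agreeOn_iff.2 ⟨fun s hs => ?_, fun t ht => ht.2⟩
  obtain ⟨t, ht, e⟩ := (agreeOn_iff.1 h).1 s (h₁ hs)
  exact ⟨t, ⟨ht, s, hs, e⟩, e⟩

theorem AgreeOn.sep_union_sep_eq {X Y X₁ X₂ : Team M} (h : AgreeOn V X Y)
    (hX : X₁ ∪ X₂ = X) :
    {t ∈ Y | ∃ s ∈ X₁, EqOn s t V} ∪ {t ∈ Y | ∃ s ∈ X₂, EqOn s t V} = Y := by
  refine subset_antisymm (union_subset (sep_subset _ _) (sep_subset _ _)) fun t ht => ?_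
  obtain ⟨s, hs, e⟩ := (agreeOn_iff.1 h).2 t ht
  rw [← hX] at hs
  exact hs.imp (fun hs => ⟨ht, s, hs, e⟩) (fun hs => ⟨ht, s, hs, e⟩)

theorem _root_.Set.EqOn.update_insert {s t : ℕ → M} (h : EqOn s t V) (y : ℕ) (a : M) :
    EqOn (update s y a) (update t y a) (insert y V) := by
  rintro z (rfl | hz)
  · simp
  · by_cases hzy : z = y
    · simp [hzy]
    · simp [update_of_ne hzy, h hz]

theorem AgreeOn.supplement {X Y : Team M} (h : AgreeOn V X Y)
    (F : (ℕ → M) → Set M) (y : ℕ) :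
    AgreeOn (insert y V) (supplement X F y)
      (supplement Y (fun t => {a | ∃ s ∈ X, EqOn s t V ∧ a ∈ F s}) y) := by
  obtain ⟨hXY, hYX⟩ := agreeOn_iff.1 h
  refine agreeOn_iff.2 ⟨?_, ?_⟩
  · rintro _ ⟨s, hs, a, ha, rfl⟩
    obtain ⟨t, ht, e⟩ := hXY s hs
    exact ⟨_, ⟨t, ht, a, ⟨s, hs, e, ha⟩, rfl⟩, e.update_insert y a⟩
  · rintro _ ⟨t, ht, a, ⟨s, hs, e, ha⟩, rfl⟩
    exact ⟨_, ⟨s, hs, a, ha, rfl⟩, e.update_insert y a⟩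

theorem AgreeOn.duplicate {X Y : Team M} (h : AgreeOn V X Y) (y : ℕ) :
    AgreeOn (insert y V) {s' | ∃ s ∈ X, ∃ a : M, s' = update s y a}
      {t' | ∃ t ∈ Y, ∃ a : M, t' = update t y a} := by
  obtain ⟨hXY, hYX⟩ := agreeOn_iff.1 h
  refine agreeOn_iff.2 ⟨?_, ?_⟩
  · rintro _ ⟨s, hs, a, rfl⟩
    obtain ⟨t, ht, e⟩ := hXY s hs
    exact ⟨_, ⟨t, ht, a, rfl⟩, e.update_insert y a⟩
  · rintro _ ⟨t, ht, a, rfl⟩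
    obtain ⟨s, hs, e⟩ := hYX t ht
    exact ⟨_, ⟨s, hs, a, rfl⟩, e.update_insert y a⟩

theorem sat_of_agreeOn {φ : TeamFormula L} (hφ : φ.Fr ⊆ V) {X Y : Team M}
    (h : AgreeOn V X Y) (hX : φ.Sat M X) : φ.Sat M Y := by
  induction φ generalizing V X Y with
  | fo φ =>
    intro t ht
    obtain ⟨s, hs, e⟩ := (agreeOn_iff.1 h).2 t ht
    exact (Formula.realize_iff_of_eqOn (e.mono hφ)).1 (hX s hs)
  | indep t1 t2 t3 =>
    have hval : ∀ ts ⊆ t1 ++ t2 ++ t3, ∀ {s t : ℕ → M}, EqOn s t V →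
        listVal ts s = listVal ts t := fun ts hts _ _ =>
      listVal_eq_of_eqOn fun t ht y hy => hφ (mem_fr_indep.2 ⟨t, hts ht, hy⟩)
    obtain ⟨hXY, hYX⟩ := agreeOn_iff.1 h
    intro t ht t' ht' ht3
    obtain ⟨s, hs, e⟩ := hYX t ht
    obtain ⟨s', hs', e'⟩ := hYX t' ht'
    rw [← hval t3 (by simp) e, ← hval t3 (by simp) e'] at ht3
    obtain ⟨s'', hs'', h1, h3, h2⟩ := hX s hs s' hs' ht3
    obtain ⟨t'', ht'', e''⟩ := hXY s'' hs''
    refine ⟨t'', ht'', ?_, ?_, ?_⟩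
    · rw [← hval t1 (by simp) e'', h1, hval t1 (by simp) e]
    · rw [← hval t3 (by simp) e'', h3, hval t3 (by simp) e]
    · rw [← hval t2 (by simp) e'', h2, hval t2 (by simp) e']
  | and φ ψ ihφ ihψ =>
    exact ⟨ihφ (subset_union_left.trans hφ) h hX.1, ihψ (subset_union_right.trans hφ) h hX.2⟩
  | or φ ψ ihφ ihψ =>
    obtain ⟨X₁, X₂, hX₁₂, h₁, h₂⟩ := hX
    exact ⟨_, _, h.sep_union_sep_eq hX₁₂,
      ihφ (subset_union_left.trans hφ) (h.sep (hX₁₂ ▸ subset_union_left)) h₁,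
      ihψ (subset_union_right.trans hφ) (h.sep (hX₁₂ ▸ subset_union_right)) h₂⟩
  | ex y φ ih =>
    obtain ⟨F, hF, hsat⟩ := hX
    refine ⟨_, fun t ht => ?_, ih (sdiff_subset_iff.1 hφ) (h.supplement F y) hsat⟩
    obtain ⟨s, hs, e⟩ := (agreeOn_iff.1 h).2 t ht
    obtain ⟨a, ha⟩ := hF s hs
    exact ⟨a, s, hs, e, ha⟩
  | all y φ ih => exact ih (sdiff_subset_iff.1 hφ) (h.duplicate y) hX

theorem agreeOn_compl_supplement {X : Team M} {F : (ℕ → M) → Set M} {x : ℕ}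
    (hF : ∀ s ∈ X, (F s).Nonempty) : AgreeOn {x}ᶜ (supplement X F x) X := by
  have e : ∀ (s : ℕ → M) (a : M), EqOn (update s x a) s {x}ᶜ := fun s a z hz => update_of_ne hz ..
  refine agreeOn_iff.2 ⟨?_, fun s hs => ?_⟩
  · rintro _ ⟨s, hs, a, -, rfl⟩
    exact ⟨s, hs, e s a⟩
  · obtain ⟨a, ha⟩ := hF s hs
    exact ⟨_, ⟨s, hs, a, ha, rfl⟩, e s a⟩

theorem supplement_sep_eq {X Y : Team M} {F : (ℕ → M) → Set M} {x : ℕ}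
    (hY : Y ⊆ supplement X F x) :
    supplement {s ∈ X | ∃ a ∈ F s, update s x a ∈ Y} (fun s => {a ∈ F s | update s x a ∈ Y}) x
      = Y := by
  refine subset_antisymm ?_ fun t ht => ?_
  · rintro _ ⟨s, -, a, ⟨-, ht⟩, rfl⟩
    exact ht
  · obtain ⟨s, hs, a, ha, rfl⟩ := hY ht
    exact ⟨s, ⟨hs, a, ha, ht⟩, a, ⟨ha, ht⟩, rfl⟩

theorem exists_split_of_union_eq_supplement {X Y Z : Team M} {F : (ℕ → M) → Set M} {x : ℕ}
    (hF : ∀ s ∈ X, (F s).Nonempty) (h : Y ∪ Z = supplement X F x) :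
    ∃ X₁ X₂ : Team M, X₁ ∪ X₂ = X ∧
      (∃ F₁ : (ℕ → M) → Set M, (∀ s ∈ X₁, (F₁ s).Nonempty) ∧ supplement X₁ F₁ x = Y) ∧
      (∃ F₂ : (ℕ → M) → Set M, (∀ s ∈ X₂, (F₂ s).Nonempty) ∧ supplement X₂ F₂ x = Z) := by
  refine ⟨_, _, subset_antisymm (union_subset (sep_subset _ _) (sep_subset _ _)) fun s hs => ?_,
    ⟨_, fun s hs => hs.2, supplement_sep_eq (h ▸ subset_union_left)⟩,
    ⟨_, fun s hs => hs.2, supplement_sep_eq (h ▸ subset_union_right)⟩⟩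
  obtain ⟨a, ha⟩ := hF s hs
  have hmem : update s x a ∈ Y ∪ Z := h ▸ ⟨s, hs, a, ha, rfl⟩
  exact hmem.imp (fun hY => ⟨hs, a, ha, hY⟩) (fun hZ => ⟨hs, a, ha, hZ⟩)

theorem supplement_union {Y Z : Team M} {F G : (ℕ → M) → Set M} {x : ℕ} :
    supplement (Y ∪ Z) (fun s => {a | s ∈ Y ∧ a ∈ F s} ∪ {a | s ∈ Z ∧ a ∈ G s}) x =
      supplement Y F x ∪ supplement Z G x := by
  ext t
  constructor
  · rintro ⟨s, -, a, ⟨hs, ha⟩ | ⟨hs, ha⟩, rfl⟩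
    exacts [Or.inl ⟨s, hs, a, ha, rfl⟩, Or.inr ⟨s, hs, a, ha, rfl⟩]
  · rintro (⟨s, hs, a, ha, rfl⟩ | ⟨s, hs, a, ha, rfl⟩)
    exacts [⟨s, Or.inl hs, a, Or.inl ⟨hs, ha⟩, rfl⟩, ⟨s, Or.inr hs, a, Or.inr ⟨hs, ha⟩, rfl⟩]

theorem supplement_singleton_self (X : Team M) (x : ℕ) :
    supplement X (fun s => {s x}) x = X := by
  ext t
  simp [supplement]

end TeamFormula

/-- extending the scope of an existential quantifier over a disjunction
(rule 4): `∃x(φ ∨ ψ)` is logically equivalent to `(∃x φ) ∨ ψ`, provided `x` is not free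
in `ψ`. -/
theorem TeamFormula.extend_scope_exists_or {L : FirstOrder.Language} {M : Type*}
    [L.Structure M] (φ ψ : TeamFormula L) (x : ℕ) (hx : x ∉ ψ.Fr) :
    ∀ X : TeamFormula.Team M,
      (TeamFormula.ex x (φ.or ψ)).Sat M X ↔ ((TeamFormula.ex x φ).or ψ).Sat M X := by
  intro X
  constructor
  · rintro ⟨F, hF, Y, Z, hYZ, hφ, hψ⟩
    obtain ⟨X₁, X₂, hX, ⟨F₁, hF₁, rfl⟩, ⟨F₂, hF₂, rfl⟩⟩ :=
      exists_split_of_union_eq_supplement hF hYZ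
    exact ⟨X₁, X₂, hX, ⟨F₁, hF₁, hφ⟩,
      sat_of_agreeOn (subset_compl_singleton_iff.2 hx) (agreeOn_compl_supplement hF₂) hψ⟩
  · rintro ⟨Y, Z, rfl, ⟨F, hF, hφ⟩, hψ⟩
    refine ⟨fun s => {a | s ∈ Y ∧ a ∈ F s} ∪ {a | s ∈ Z ∧ a ∈ ({s x} : Set M)}, ?_,
      supplement Y F x, Z, ?_, hφ, hψ⟩
    · rintro s (hs | hs)
      · exact (hF s hs).mono fun a ha => Or.inl ⟨hs, ha⟩
      · exact ⟨s x, Or.inr ⟨hs, rfl⟩⟩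
    · show supplement Y F x ∪ Z = supplement (Y ∪ Z) _ x
      rw [supplement_union, supplement_singleton_self]
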